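/- arXiv:2102.06067 — 2 statements merged into one kernel-verified Lean document; each statement's English description precedes it below -/
import Mathlib

section
/- Let V be a value co-quantale with symmetric distance d_V(a,b) := (a ∸ b) ⊔ (b ∸ a), let I be a nonempty set, and let (a_i)_{i∈I}, (b_i)_{i∈I} be families in V. If ε ∈ V⁺ satisfies d_V(a_i,b_i) ≤ ε for all i ∈ I, then d_V(⨆_{i∈I} a_i, ⨆_{i∈I} b_i) ≤ ε and d_V(⨅_{i∈I} a_i, ⨅_{i∈I} b_i) ≤ ε. -/
/-- A co-quantale: a complete lattice with a commutative monoid operation `+`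
whose identity `0` is the bottom element and which distributes over arbitrary infima. -/
class CoQuantale (V : Type*) extends CompleteLattice V, AddCommMonoid V where
  bot_eq_zero : (⊥ : V) = 0
  add_sInf : ∀ (a : V) (s : Set V), a + sInf s = ⨅ b ∈ s, a + b

/-- Truncated subtraction `a ∸ b := ⨅ {r | a ≤ r + b}`. -/
noncomputable def cosub {V : Type*} [CoQuantale V] (a b : V) : V :=
  sInf {r | a ≤ r + b}

/-- `x` is co-well below `y` (`x ≺ y`). -/
def cwb {L : Type*} [CompleteLattice L] (x y : L) : Prop :=
  ∀ A : Set L, sInf A ≤ x → ∃ a ∈ A, a ≤ y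

/-- A value co-quantale: a co-quantale whose underlying lattice is a value lattice. -/
class ValueCoQuantale (V : Type*) extends CoQuantale V where
  completely_distrib : ∀ a : V, a = sInf {b | cwb a b}
  zero_cwb_top : cwb (0 : V) ⊤
  cwb_inf : ∀ δ δ' : V, cwb (0 : V) δ → cwb (0 : V) δ' → cwb (0 : V) (δ ⊓ δ')

/-- The symmetric distance on a co-quantale. -/
noncomputable def symd {V : Type*} [CoQuantale V] (a b : V) : V :=
  cosub a b ⊔ cosub b a

/-- The positives filter `V⁺ = {ε : V // 0 ≺ ε}`. -/
abbrev Pos (V : Type*) [ValueCoQuantale V] : Type _ := {ε : V // cwb (0 : V) ε}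

/-- `Δ : V⁺ → V⁺` is a modulus of uniform continuity for `f`. -/
def IsModulus {V : Type*} [ValueCoQuantale V] {M N : Type*}
    (dM : M → M → V) (dN : N → N → V) (f : M → N) (Δ : Pos V → Pos V) : Prop :=
  ∀ x y : M, ∀ ε : Pos V, dM x y ≤ (Δ ε).1 → dN (f x) (f y) ≤ ε.1

/-- Uniform convergence of a sequence of maps. -/
def UnifConv {V : Type*} [ValueCoQuantale V] {M N : Type*}
    (dN : N → N → V) (f : ℕ → M → N) (g : M → N) : Prop :=
  ∀ ε : V, cwb (0 : V) ε → ∃ n : ℕ, ∀ m ≥ n, ∀ x : M, dN (f m x) (g x) ≤ ε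

/-- `l` is a `D`-ultralimit of the family `a`, w.r.t. the symmetric distance on `V`. -/
def IsUltralimit {V : Type*} [ValueCoQuantale V] {I : Type*}
    (D : Ultrafilter I) (a : I → V) (l : V) : Prop :=
  ∀ ε : V, cwb (0 : V) ε → {i | symd l (a i) ≤ ε} ∈ D

lemma CoQuantale.add_iInf' {V : Type*} [CoQuantale V] {ι : Type*} (c : V) (f : ι → V) :
    c + ⨅ i, f i = ⨅ i, c + f i := by
  rw [iInf, CoQuantale.add_sInf c (Set.range f), iInf_range]

lemma CoQuantale.add_le_add_left' {V : Type*} [CoQuantale V] {x y : V} (c : V) (hxy : x ≤ y) :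
    c + x ≤ c + y := by
  have : c + (x ⊓ y) = (c + x) ⊓ (c + y) := by
    have := CoQuantale.add_sInf c {x, y}
    simpa [sInf_pair, iInf_or, iInf_inf_eq] using this
  rw [inf_eq_left.mpr hxy] at this
  rw [this]
  exact inf_le_right

lemma le_cosub_add {V : Type*} [CoQuantale V] (a b : V) : a ≤ cosub a b + b := by
  rw [cosub, add_comm, CoQuantale.add_sInf]
  exact le_iInf fun r => le_iInf fun hr => by rw [add_comm]; exact hr

lemma cosub_le_iff {V : Type*} [CoQuantale V] {a b ε : V} :
    cosub a b ≤ ε ↔ a ≤ ε + b := by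
  constructor
  · intro hc
    exact (le_cosub_add a b).trans (by
      have := CoQuantale.add_le_add_left' b hc
      rw [add_comm b, add_comm b] at this
      exact this)
  · intro hab
    exact sInf_le hab

/-- if `d_V(a_i, b_i) ≤ ε` for all `i`, the same bound holds for
the suprema and the infima. -/
theorem symd_iSup_iInf_le {V : Type*} [ValueCoQuantale V] {ι : Type*} [Nonempty ι]
    (a b : ι → V) (ε : V) (hε : cwb (0 : V) ε)
    (h : ∀ i : ι, symd (a i) (b i) ≤ ε) :
    symd (⨆ i, a i) (⨆ i, b i) ≤ ε ∧ symd (⨅ i, a i) (⨅ i, b i) ≤ ε := by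
  have hab : ∀ i, a i ≤ ε + b i := fun i =>
    cosub_le_iff.mp ((le_sup_left.trans (h i)))
  have hba : ∀ i, b i ≤ ε + a i := fun i =>
    cosub_le_iff.mp ((le_sup_right.trans (h i)))
  have sup_le : ∀ (u v : ι → V), (∀ i, u i ≤ ε + v i) → cosub (⨆ i, u i) (⨆ i, v i) ≤ ε := by
    intro u v huv
    rw [cosub_le_iff]
    exact iSup_le fun i => (huv i).trans
      (CoQuantale.add_le_add_left' ε (le_iSup v i))
  have inf_le : ∀ (u v : ι → V), (∀ i, u i ≤ ε + v i) → cosub (⨅ i, u i) (⨅ i, v i) ≤ ε := by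
    intro u v huv
    rw [cosub_le_iff, CoQuantale.add_iInf']
    exact le_iInf fun i => (iInf_le u i).trans (huv i)
  exact ⟨sup_le_iff.mpr ⟨sup_le a b hab, sup_le b a hba⟩,
    sup_le_iff.mpr ⟨inf_le a b hab, inf_le b a hba⟩⟩
end

section
/- Let V be a value co-quantale with symmetric distance d_V, let (M,d_M), (N,d_N) be V-continuity spaces, and let (f_n)_{n∈ℕ} be a sequence of maps from M × N to (V,d_V) uniformly converging to f : M × N → V. Then the sequence of maps x ↦ ⨆_{y∈N} f_n(x,y) uniformly converges to x ↦ ⨆_{y∈N} f(x,y), and the sequence x ↦ ⨅_{y∈N} f_n(x,y) uniformly converges to x ↦ ⨅_{y∈N} f(x,y). -/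
section Aux
variable {V : Type*} [CoQuantale V]

lemma coq_add_iInf {I : Sort*} (a : V) (g : I → V) : a + ⨅ i, g i = ⨅ i, a + g i := by
  calc a + ⨅ i, g i = a + sInf (Set.range g) := by rw [sInf_range]
    _ = ⨅ b ∈ Set.range g, a + b := CoQuantale.add_sInf _ _
    _ = ⨅ i, a + g i := iInf_range

lemma symd_comm (a b : V) : symd a b = symd b a := by
  unfold symd; exact sup_comm _ _

lemma coq_add_le_add_left {b c : V} (h : b ≤ c) (a : V) : a + b ≤ a + c := by
  have h2 := CoQuantale.add_sInf a {b, c}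
  rw [show sInf ({b, c} : Set V) = b by rw [sInf_pair]; exact inf_eq_left.mpr h,
    iInf_pair] at h2
  calc a + b = (a + b) ⊓ (a + c) := h2
    _ ≤ a + c := inf_le_right

lemma coq_le_cosub_add (a b : V) : a ≤ cosub a b + b := by
  rw [add_comm, cosub]
  have h := CoQuantale.add_sInf b {r | a ≤ r + b}
  rw [h]
  exact le_iInf₂ fun r hr => by rw [add_comm]; exact hr

lemma coq_cosub_le {a b r : V} (h : a ≤ r + b) : cosub a b ≤ r := sInf_le h

end Aux

/-- uniform convergence is preserved by taking `⨆` and `⨅` over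
the second coordinate. -/
theorem unifConv_sup_inf {V : Type*} [ValueCoQuantale V] {M N : Type*}
    (dM : M → M → V) (dN : N → N → V)
    (hreflM : ∀ x : M, dM x x = 0) (htransM : ∀ x y z : M, dM x y ≤ dM x z + dM z y)
    (hreflN : ∀ x : N, dN x x = 0) (htransN : ∀ x y z : N, dN x y ≤ dN x z + dN z y)
    (f : ℕ → M × N → V) (F : M × N → V)
    (h : UnifConv (fun a b : V => symd a b) f F) :
    UnifConv (fun a b : V => symd a b)
      (fun n (x : M) => ⨆ y : N, f n (x, y)) (fun x : M => ⨆ y : N, F (x, y)) ∧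
    UnifConv (fun a b : V => symd a b)
      (fun n (x : M) => ⨅ y : N, f n (x, y)) (fun x : M => ⨅ y : N, F (x, y)) := by
  have key : ∀ ε : V, cwb (0 : V) ε → ∀ (a b : M × N → V),
      (∀ p, symd (a p) (b p) ≤ ε) → ∀ x : M,
      (∀ y : N, a (x, y) ≤ ε + b (x, y)) := by
    intro ε hε a b hab x y
    have h1 : cosub (a (x, y)) (b (x, y)) ≤ ε :=
      le_trans le_sup_left (hab (x, y))
    calc a (x, y) ≤ cosub (a (x, y)) (b (x, y)) + b (x, y) := coq_le_cosub_add _ _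
      _ ≤ ε + b (x, y) := by
          rw [add_comm, add_comm ε]; exact coq_add_le_add_left h1 _
  constructor
  · intro ε hε
    obtain ⟨n, hn⟩ := h ε hε
    refine ⟨n, fun m hm x => ?_⟩
    have hf : ∀ y : N, f m (x, y) ≤ ε + F (x, y) := key ε hε _ _ (hn m hm) x
    have hF : ∀ y : N, F (x, y) ≤ ε + f m (x, y) :=
      key ε hε F (f m) (fun p => (symd_comm _ _).trans_le (hn m hm p)) x
    apply sup_le
    · apply coq_cosub_le
      exact iSup_le fun y => le_trans (hf y)
        (coq_add_le_add_left (le_iSup (fun y => F (x, y)) y) ε)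
    · apply coq_cosub_le
      exact iSup_le fun y => le_trans (hF y)
        (coq_add_le_add_left (le_iSup (fun y => f m (x, y)) y) ε)
  · intro ε hε
    obtain ⟨n, hn⟩ := h ε hε
    refine ⟨n, fun m hm x => ?_⟩
    have hf : ∀ y : N, f m (x, y) ≤ ε + F (x, y) := key ε hε _ _ (hn m hm) x
    have hF : ∀ y : N, F (x, y) ≤ ε + f m (x, y) :=
      key ε hε F (f m) (fun p => (symd_comm _ _).trans_le (hn m hm p)) x
    apply sup_le
    · apply coq_cosub_le
      rw [coq_add_iInf]
      exact le_iInf fun y => le_trans (iInf_le (fun y => f m (x, y)) y) (hf y)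
    · apply coq_cosub_le
      rw [coq_add_iInf]
      exact le_iInf fun y => le_trans (iInf_le (fun y => F (x, y)) y) (hF y)
end
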